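/- Let X and K be real Hilbert spaces, f ∈ Γ₀(X), and A : X → K a bounded linear operator with operator norm ‖A‖_op ≤ 1. Then the LAL operator T_LAL : X × K → X × K : (x, ν) ↦ (x_T, ν_T), defined by x_T := prox_f(x − A*Ax + A*ν) and ν_T := ν − A x_T, is nonexpansive on the product Hilbert space X × K (equipped with the norm ‖(x,ν)‖² = ‖x‖² + ‖ν‖²), i.e., ‖T_LAL(x₁,ν₁) − T_LAL(x₂,ν₂)‖ ≤ ‖(x₁,ν₁) − (x₂,ν₂)‖ for all (x₁,ν₁), (x₂,ν₂) ∈ X × K. -/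

import Mathlib

noncomputable section

open Filter Topology Bornology
open scoped InnerProductSpace Pointwise Classical

/-- A function with values in the extended reals is *proper* if it is somewhere finite
and nowhere `⊥`. -/
def EProper {H : Type*} (f : H → EReal) : Prop :=
  (∃ x, f x ≠ ⊤) ∧ ∀ x, f x ≠ ⊥

/-- Convexity for extended-real-valued functions. -/
def EConvex {H : Type*} [AddCommGroup H] [Module ℝ H] (f : H → EReal) : Prop :=
  ∀ x y : H, ∀ a b : ℝ, 0 ≤ a → 0 ≤ b → a + b = 1 →
    f (a • x + b • y) ≤ (a : EReal) * f x + (b : EReal) * f y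

/-- The class `Γ₀(H)` of proper lower semicontinuous convex functions `H → (-∞, +∞]`. -/
def Gamma0 {H : Type*} [NormedAddCommGroup H] [NormedSpace ℝ H] (f : H → EReal) : Prop :=
  EProper f ∧ LowerSemicontinuous f ∧ EConvex f

/-- Effective domain `dom f = {x | f x < ∞}`. -/
def edom {H : Type*} (f : H → EReal) : Set H := {x | f x ≠ ⊤}

/-- Set of global minimizers of `f`. -/
def argminSet {H : Type*} (f : H → EReal) : Set H := {x | ∀ y, f x ≤ f y}

/-- Fenchel conjugate `f*(u) = sup_x (⟪x,u⟫ - f x)`. -/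
def econj {H : Type*} [NormedAddCommGroup H] [InnerProductSpace ℝ H]
    (f : H → EReal) (u : H) : EReal :=
  ⨆ x : H, ((⟪x, u⟫_ℝ : EReal) - f x)

/-- Subdifferential `∂f(x) = {u | ∀ y, ⟪y - x, u⟫ + f x ≤ f y}`. -/
def esubdiff {H : Type*} [NormedAddCommGroup H] [InnerProductSpace ℝ H]
    (f : H → EReal) (x : H) : Set H :=
  {u | ∀ y : H, ((⟪y - x, u⟫_ℝ : ℝ) : EReal) + f x ≤ f y}

/-- `p` is the proximal point of `f` at `x`, i.e. a minimizer of
`y ↦ f y + (1/2)‖y - x‖²` (which is unique for `f ∈ Γ₀`). -/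
def IsProxPt {H : Type*} [NormedAddCommGroup H] (f : H → EReal) (x p : H) : Prop :=
  ∀ y : H, f p + ((((1:ℝ)/2) * ‖p - x‖ ^ 2 : ℝ) : EReal)
    ≤ f y + ((((1:ℝ)/2) * ‖y - x‖ ^ 2 : ℝ) : EReal)

/-- Indicator function of a set, with values in the extended reals. -/
def eind {H : Type*} (C : Set H) : H → EReal := fun x => if x ∈ C then 0 else ⊤

/-- Strong relative interior: the points `x ∈ C` such that the cone generated by `C - x`
coincides with the closed linear span of `C - x`. -/
def sriSet {H : Type*} [NormedAddCommGroup H] [NormedSpace ℝ H] (C : Set H) : Set H :=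
  {x | x ∈ C ∧
    {y | ∃ t : ℝ, 0 < t ∧ ∃ c ∈ C, y = t • (c - x)} =
      closure ((Submodule.span ℝ ((fun c => c - x) '' C) : Submodule ℝ H) : Set H)}

/-!
With `u = x - A*Ax + A*ν` and `p = prox_f u`, the residual `u - p` is a subgradient of `f` at `p`,
so monotonicity of `∂f` makes `prox_f` firmly nonexpansive: `‖p₁ - p₂‖² ≤ ⟪p₁ - p₂, u₁ - u₂⟫`.
Writing `x, ν, p` for the differences of two inputs and of their prox points, this bound gives
`‖p‖² + ‖ν - Ap‖² ≤ ‖x‖² + ‖ν‖² - (‖x - p‖² - ‖A(x - p)‖²) - ‖Ax‖²`, and `‖A‖ ≤ 1` finishes.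
-/

theorem le_of_forall_pos_lt_one_le_add_mul {a b c : ℝ}
    (h : ∀ t : ℝ, 0 < t → t < 1 → a ≤ b + t * c) : a ≤ b := by
  have hlim : Tendsto (fun t : ℝ => b + t * c) (𝓝[>] 0) (𝓝 b) := by
    have hcont : Continuous fun t : ℝ => b + t * c := by fun_prop
    simpa using (hcont.tendsto 0).mono_left nhdsWithin_le_nhds
  refine ge_of_tendsto hlim ?_
  filter_upwards [Ioo_mem_nhdsGT one_pos] with t ht using h t ht.1 ht.2

theorem EProper.exists_eq_coe {H : Type*} {f : H → EReal} (hf : EProper f) {x : H}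
    (hx : f x ≠ ⊤) : ∃ r : ℝ, f x = r :=
  ⟨(f x).toReal, (EReal.coe_toReal hx (hf.2 x)).symm⟩

theorem IsProxPt.ne_top {H : Type*} [NormedAddCommGroup H] {f : H → EReal} {u p : H}
    (h : IsProxPt f u p) (hf : ∃ z, f z ≠ ⊤) : f p ≠ ⊤ := by
  obtain ⟨z, hz⟩ := hf
  intro hp
  have hz' := h z
  rw [hp, EReal.top_add_of_ne_bot (EReal.coe_ne_bot _), top_le_iff] at hz'
  exact (EReal.add_lt_top hz (EReal.coe_ne_top _)).ne hz'

section Prox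

variable {H : Type*} [NormedAddCommGroup H] [InnerProductSpace ℝ H] {f : H → EReal}

theorem IsProxPt.sub_mem_esubdiff (hf : EProper f) (hconv : EConvex f) {u p : H}
    (h : IsProxPt f u p) : u - p ∈ esubdiff f p := by
  intro q
  obtain ⟨rp, hrp⟩ := hf.exists_eq_coe (h.ne_top hf.1)
  rcases eq_or_ne (f q) ⊤ with hq | hq
  · rw [hq]; exact le_top
  obtain ⟨rq, hrq⟩ := hf.exists_eq_coe hq
  rw [hrp, hrq, ← EReal.coe_add, EReal.coe_le_coe_iff]
  -- test the prox inequality at `(1 - t) • p + t • q` and let `t → 0`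
  refine le_of_forall_pos_lt_one_le_add_mul (c := ‖q - p‖ ^ 2 / 2) fun t ht0 ht1 => ?_
  have hconv_t : f ((1 - t) • p + t • q) ≤ (((1 - t) * rp + t * rq : ℝ) : EReal) := by
    simpa [hrp, hrq] using hconv p q (1 - t) t (by linarith) ht0.le (by ring)
  have hprox : rp + 1 / 2 * ‖p - u‖ ^ 2
      ≤ (1 - t) * rp + t * rq + 1 / 2 * ‖(1 - t) • p + t • q - u‖ ^ 2 := by
    have := (h _).trans (add_le_add_left hconv_t _)
    rwa [hrp, ← EReal.coe_add, ← EReal.coe_add, EReal.coe_le_coe_iff] at this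
  have hnorm : ‖(1 - t) • p + t • q - u‖ ^ 2
      = ‖p - u‖ ^ 2 - 2 * t * ⟪q - p, u - p⟫_ℝ + t ^ 2 * ‖q - p‖ ^ 2 := by
    rw [show (1 - t) • p + t • q - u = -(u - p) + t • (q - p) by
        rw [sub_smul, one_smul, smul_sub]; abel,
      norm_add_sq_real, inner_neg_left, real_inner_smul_right, norm_neg, norm_smul,
      Real.norm_of_nonneg ht0.le, real_inner_comm, norm_sub_rev u p]
    ring
  rw [hnorm] at hprox
  have hscaled : t * (⟪q - p, u - p⟫_ℝ + rp) ≤ t * (rq + t * (‖q - p‖ ^ 2 / 2)) := by linarith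
  exact le_of_mul_le_mul_left hscaled ht0

theorem inner_sub_nonneg_of_mem_esubdiff (hf : EProper f) {x y g₁ g₂ : H} (hx : f x ≠ ⊤)
    (hy : f y ≠ ⊤) (h₁ : g₁ ∈ esubdiff f x) (h₂ : g₂ ∈ esubdiff f y) :
    0 ≤ ⟪x - y, g₁ - g₂⟫_ℝ := by
  obtain ⟨rx, hrx⟩ := hf.exists_eq_coe hx
  obtain ⟨ry, hry⟩ := hf.exists_eq_coe hy
  have h₁y := h₁ y
  have h₂x := h₂ x
  rw [hrx, hry, ← EReal.coe_add, EReal.coe_le_coe_iff, ← neg_sub x y, inner_neg_left] at h₁y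
  rw [hrx, hry, ← EReal.coe_add, EReal.coe_le_coe_iff] at h₂x
  rw [inner_sub_right]
  linarith

theorem IsProxPt.norm_sub_sq_le_inner (hf : EProper f) (hconv : EConvex f) {u₁ u₂ p₁ p₂ : H}
    (h₁ : IsProxPt f u₁ p₁) (h₂ : IsProxPt f u₂ p₂) :
    ‖p₁ - p₂‖ ^ 2 ≤ ⟪p₁ - p₂, u₁ - u₂⟫_ℝ := by
  have hmono := inner_sub_nonneg_of_mem_esubdiff hf (h₁.ne_top hf.1) (h₂.ne_top hf.1)
    (h₁.sub_mem_esubdiff hf hconv) (h₂.sub_mem_esubdiff hf hconv)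
  rw [show u₁ - p₁ - (u₂ - p₂) = (u₁ - u₂) - (p₁ - p₂) by abel, inner_sub_right,
    real_inner_self_eq_norm_sq] at hmono
  linarith

end Prox

theorem norm_sq_add_norm_sub_sq_le {X K : Type*} [NormedAddCommGroup X] [InnerProductSpace ℝ X]
    [NormedAddCommGroup K] [InnerProductSpace ℝ K] (A : X →L[ℝ] K) (hA : ‖A‖ ≤ 1)
    {x p : X} (ν : K) (h : ‖p‖ ^ 2 ≤ ⟪p, x⟫_ℝ - ⟪A p, A x⟫_ℝ + ⟪A p, ν⟫_ℝ) :
    ‖p‖ ^ 2 + ‖ν - A p‖ ^ 2 ≤ ‖x‖ ^ 2 + ‖ν‖ ^ 2 := by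
  have hAxp : ‖A (x - p)‖ ^ 2 ≤ ‖x - p‖ ^ 2 := by
    have := A.le_of_opNorm_le hA (x - p)
    rw [one_mul] at this
    gcongr
  rw [map_sub, norm_sub_sq_real, norm_sub_sq_real, real_inner_comm p x,
    real_inner_comm (A p) (A x)] at hAxp
  rw [norm_sub_sq_real, real_inner_comm (A p) ν]
  linarith [sq_nonneg ‖A x‖]

/-- Proposition 2(b): nonexpansiveness of the LAL operator.
If `‖A‖_op ≤ 1` then `T_LAL` is nonexpansive on the product Hilbert space `X × K`
equipped with the norm `‖(x,ν)‖² = ‖x‖² + ‖ν‖²`. -/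
theorem statement2
    {X K : Type*} [NormedAddCommGroup X] [InnerProductSpace ℝ X] [CompleteSpace X]
    [NormedAddCommGroup K] [InnerProductSpace ℝ K] [CompleteSpace K]
    (f : X → EReal) (hf : Gamma0 f) (A : X →L[ℝ] K) (hA : ‖A‖ ≤ 1)
    (proxf : X → X) (hproxf : ∀ x, IsProxPt f x (proxf x))
    (T : X × K → X × K)
    (hT : ∀ w : X × K, T w =
      (proxf (w.1 - A.adjoint (A w.1) + A.adjoint w.2),
       w.2 - A (proxf (w.1 - A.adjoint (A w.1) + A.adjoint w.2)))) :
    ∀ w₁ w₂ : X × K,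
      Real.sqrt (‖(T w₁).1 - (T w₂).1‖ ^ 2 + ‖(T w₁).2 - (T w₂).2‖ ^ 2)
        ≤ Real.sqrt (‖w₁.1 - w₂.1‖ ^ 2 + ‖w₁.2 - w₂.2‖ ^ 2) := by
  rintro ⟨x₁, ν₁⟩ ⟨x₂, ν₂⟩
  simp only [hT]
  apply Real.sqrt_le_sqrt
  set u : X → K → X := fun x ν => x - A.adjoint (A x) + A.adjoint ν
  have hfirm := (hproxf (u x₁ ν₁)).norm_sub_sq_le_inner hf.1 hf.2.2 (hproxf (u x₂ ν₂))
  have hu : u x₁ ν₁ - u x₂ ν₂ = (x₁ - x₂) - A.adjoint (A (x₁ - x₂)) + A.adjoint (ν₁ - ν₂) := by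
    simp only [u, map_sub]; abel
  rw [hu, inner_add_right, inner_sub_right, ContinuousLinearMap.adjoint_inner_right,
    ContinuousLinearMap.adjoint_inner_right] at hfirm
  have hν : ν₁ - A (proxf (u x₁ ν₁)) - (ν₂ - A (proxf (u x₂ ν₂)))
      = (ν₁ - ν₂) - A (proxf (u x₁ ν₁) - proxf (u x₂ ν₂)) := by
    rw [map_sub]; abel
  rw [hν]
  exact norm_sq_add_norm_sub_sq_le A hA _ hfirm
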